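/- arXiv:1912.08102 — 2 statements merged into one kernel-verified Lean document; each statement's English description precedes it below -/
import Mathlib

section
/- At the coexistence equilibrium P₂ = (u₂, u₂ + C) with u₂ = (H₁ + √Δ)/2, the Jacobian of the temporal system has determinant det J = S(H₁ + √Δ)√Δ / (H₁ + 2A + √Δ), which is strictly positive whenever H₁ > 0 and Δ > 0. -/
/-! At an interior equilibrium `(u, u + C)` the predator row of the Jacobian is `(S, -S)`, so the
determinant is `S` times `-J₁₁ - J₁₂`. The prey nullcline `Q (u + C) = (1 - u)(u + A)` removes `Q`
from `J₁₁`, leaving `det J = S u (2u + A + Q - 1) / (u + A) = S u (2u - H₁) / (u + A)`.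
For `u₂ = (H₁ + √Δ)/2`, the larger root of `u² = H₁ u + H₂` (which is the nullcline equation),
`2 u₂ - H₁ = √Δ`. -/

section HollingTanner

variable {A C Q S : ℝ}

theorem deriv_prey_growth_fst {u v : ℝ} (hu : u + A ≠ 0) :
    deriv (fun x : ℝ => x * ((1 - x) - Q * v / (x + A))) u =
      1 - 2 * u - Q * v * A / (u + A) ^ 2 := by
  have h : HasDerivAt (fun x : ℝ => x * ((1 - x) - Q * v / (x + A))) _ u :=
    (hasDerivAt_id u).mul (((hasDerivAt_const u 1).sub (hasDerivAt_id u)).sub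
      ((hasDerivAt_const u (Q * v)).div ((hasDerivAt_id u).add_const A) hu))
  rw [h.deriv, id]
  field_simp
  ring

theorem deriv_prey_growth_snd (u v : ℝ) :
    deriv (fun y : ℝ => u * ((1 - u) - Q * y / (u + A))) v = -(Q * u / (u + A)) := by
  have h : HasDerivAt (fun y : ℝ => u * ((1 - u) - Q * y / (u + A))) _ v :=
    ((hasDerivAt_const v (1 - u)).sub
      (((hasDerivAt_id v).const_mul Q).div_const (u + A))).const_mul u
  rw [h.deriv]
  ring

theorem deriv_predator_growth_fst {u v : ℝ} (hu : u + C ≠ 0) :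
    deriv (fun x : ℝ => v * (S * (1 - v / (x + C)))) u = S * v ^ 2 / (u + C) ^ 2 := by
  have h : HasDerivAt (fun x : ℝ => v * (S * (1 - v / (x + C)))) _ u :=
    (((hasDerivAt_const u 1).sub
      ((hasDerivAt_const u v).div ((hasDerivAt_id u).add_const C) hu)).const_mul S).const_mul v
  rw [h.deriv, id]
  field_simp
  ring

theorem deriv_predator_growth_snd (u v : ℝ) :
    deriv (fun y : ℝ => y * (S * (1 - y / (u + C)))) v = S * (1 - 2 * v / (u + C)) := by
  have h : HasDerivAt (fun y : ℝ => y * (S * (1 - y / (u + C)))) _ v :=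
    (hasDerivAt_id v).mul
      (((hasDerivAt_const v 1).sub ((hasDerivAt_id v).div_const (u + C))).const_mul S)
  rw [h.deriv]
  simp only [id, one_mul]
  ring

theorem jacobian_det_of_prey_nullcline {u : ℝ} (hA : u + A ≠ 0) (hC : u + C ≠ 0)
    (hnull : Q * (u + C) = (1 - u) * (u + A)) :
    deriv (fun x : ℝ => x * ((1 - x) - Q * (u + C) / (x + A))) u *
        deriv (fun y : ℝ => y * (S * (1 - y / (u + C)))) (u + C) -
      deriv (fun y : ℝ => u * ((1 - u) - Q * y / (u + A))) (u + C) *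
        deriv (fun x : ℝ => (u + C) * (S * (1 - (u + C) / (x + C)))) u =
      S * u * (2 * u + A + Q - 1) / (u + A) := by
  rw [deriv_prey_growth_fst hA, deriv_prey_growth_snd, deriv_predator_growth_fst hC,
    deriv_predator_growth_snd, hnull]
  field_simp
  ring

end HollingTanner

theorem stmt_9_general (A C Q S : ℝ) (hA : 0 < A) (hC : 0 < C) (hS : 0 < S)
    (H₁ H₂ Δ : ℝ) (hH₁ : H₁ = 1 - A - Q) (hH₂ : H₂ = A - C * Q)
    (hΔ : Δ = H₁ ^ 2 + 4 * H₂) (hH₁pos : 0 < H₁) (hΔpos : 0 < Δ) :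
    let u₂ := (H₁ + Real.sqrt Δ) / 2
    let J11 := deriv (fun u : ℝ => u * ((1 - u) - Q * (u₂ + C) / (u + A))) u₂
    let J12 := deriv (fun v : ℝ => u₂ * ((1 - u₂) - Q * v / (u₂ + A))) (u₂ + C)
    let J21 := deriv (fun u : ℝ => (u₂ + C) * (S * (1 - (u₂ + C) / (u + C)))) u₂
    let J22 := deriv (fun v : ℝ => v * (S * (1 - v / (u₂ + C)))) (u₂ + C)
    J11 * J22 - J12 * J21 =
        S * (H₁ + Real.sqrt Δ) * Real.sqrt Δ / (H₁ + 2 * A + Real.sqrt Δ) ∧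
    0 < S * (H₁ + Real.sqrt Δ) * Real.sqrt Δ / (H₁ + 2 * A + Real.sqrt Δ) := by
  intro u₂ J11 J12 J21 J22
  have hsqrt_pos : 0 < Real.sqrt Δ := Real.sqrt_pos.mpr hΔpos
  have hsqrt_sq : Real.sqrt Δ ^ 2 = Δ := Real.sq_sqrt hΔpos.le
  have hu₂ : 0 < u₂ := by positivity
  have hnull : Q * (u₂ + C) = (1 - u₂) * (u₂ + A) := by
    simp only [u₂]
    linear_combination (hsqrt_sq + hΔ) / 4 + (H₁ + Real.sqrt Δ) / 2 * hH₁ + hH₂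
  have hdet : J11 * J22 - J12 * J21 = S * u₂ * (2 * u₂ + A + Q - 1) / (u₂ + A) :=
    jacobian_det_of_prey_nullcline (by positivity) (by positivity) hnull
  have hgap : 2 * u₂ + A + Q - 1 = Real.sqrt Δ := by simp only [u₂]; linarith
  refine ⟨?_, by positivity⟩
  rw [hdet, hgap]
  simp only [u₂]
  field_simp
  ring

/-- At P₂ = (u₂, u₂ + C), u₂ = (H₁ + √Δ)/2, the Jacobian of the temporal
    system has determinant S(H₁+√Δ)√Δ/(H₁+2A+√Δ), which is positive when
    H₁ > 0 and Δ > 0. -/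
theorem stmt_9 (A C Q S : ℝ) (hA : 0 < A) (hC : 0 < C) (hQ : 0 < Q) (hS : 0 < S)
    (H₁ H₂ Δ : ℝ) (hH₁ : H₁ = 1 - A - Q) (hH₂ : H₂ = A - C * Q)
    (hΔ : Δ = H₁ ^ 2 + 4 * H₂) (hH₁pos : 0 < H₁) (hΔpos : 0 < Δ) :
    let u₂ := (H₁ + Real.sqrt Δ) / 2
    let J11 := deriv (fun u : ℝ => u * ((1 - u) - Q * (u₂ + C) / (u + A))) u₂
    let J12 := deriv (fun v : ℝ => u₂ * ((1 - u₂) - Q * v / (u₂ + A))) (u₂ + C)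
    let J21 := deriv (fun u : ℝ => (u₂ + C) * (S * (1 - (u₂ + C) / (u + C)))) u₂
    let J22 := deriv (fun v : ℝ => v * (S * (1 - v / (u₂ + C)))) (u₂ + C)
    J11 * J22 - J12 * J21 =
        S * (H₁ + Real.sqrt Δ) * Real.sqrt Δ / (H₁ + 2 * A + Real.sqrt Δ) ∧
    0 < S * (H₁ + Real.sqrt Δ) * Real.sqrt Δ / (H₁ + 2 * A + Real.sqrt Δ) :=
  stmt_9_general A C Q S hA hC hS H₁ H₂ Δ hH₁ hH₂ hΔ hH₁pos hΔpos
end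

section
/- At the coexistence equilibrium P₂ = (u₂, u₂ + C), the trace of the Jacobian of the temporal system equals (H₁ + √Δ)(Q - √Δ)/(H₁ + 2A + √Δ) - S; hence if S > (H₁ + √Δ)(Q - √Δ)/(H₁ + 2A + √Δ) the trace is negative, and combined with positive determinant both eigenvalues have negative real part, so P₂ is linearly stable. -/
/-!
At `u₂` the prey factor `(1 - u) - Q (u₂ + C) / (u + A)` vanishes and at `u₂ + C` the predator
factor `S (1 - v / (u₂ + C))` vanishes, so each diagonal entry of the Jacobian is the coordinate
times the derivative of its factor: `-S` for the predator and `u₂ (1 - 2u₂ - A) / (u₂ + A)` for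
the prey, which is the stated expression since `2u₂ = H₁ + √Δ`. Stability is then the
Routh–Hurwitz criterion for `z² - tr z + det`.
-/

theorem Complex.re_neg_of_sq_sub_mul_add_eq_zero {t d : ℝ} (ht : t < 0) (hd : 0 < d) {z : ℂ}
    (hz : z ^ 2 - t * z + d = 0) : z.re < 0 := by
  have hre := congrArg Complex.re hz
  have him := congrArg Complex.im hz
  simp only [sq, Complex.add_re, Complex.sub_re, Complex.mul_re, Complex.ofReal_re,
    Complex.ofReal_im, Complex.zero_re, Complex.add_im, Complex.sub_im, Complex.mul_im,
    Complex.zero_im] at hre him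
  have him' : z.im * (2 * z.re - t) = 0 := by linarith
  rcases mul_eq_zero.mp him' with h_real | h_re_half
  · rw [h_real] at hre
    nlinarith
  · linarith

theorem HasDerivAt.id_mul_of_eq_zero {𝕜 : Type*} [NontriviallyNormedField 𝕜] {g : 𝕜 → 𝕜}
    {g' x : 𝕜} (hg : HasDerivAt g g' x) (hx : g x = 0) :
    HasDerivAt (fun u => u * g u) (x * g') x := by
  have := (hasDerivAt_id' x).mul hg
  rw [hx, mul_zero, zero_add] at this
  exact this

theorem sq_eq_mul_add_of_eq_add_sqrt {b c u : ℝ} (hdisc : 0 ≤ b ^ 2 + 4 * c)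
    (hu : u = (b + Real.sqrt (b ^ 2 + 4 * c)) / 2) : u ^ 2 = b * u + c := by
  have := Real.sq_sqrt hdisc
  subst hu
  linear_combination this / 4

theorem deriv_logistic_at_capacity {S K : ℝ} (hK : K ≠ 0) :
    deriv (fun v : ℝ => v * (S * (1 - v / K))) K = -S := by
  have hg : HasDerivAt (fun v : ℝ => S * (1 - v / K)) (S * (0 - 1 / K)) K :=
    ((hasDerivAt_const K 1).sub ((hasDerivAt_id K).div_const K)).const_mul S
  rw [(hg.id_mul_of_eq_zero (by simp [hK])).deriv]
  field_simp
  ring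

theorem deriv_holling_prey_at_equilibrium {A Q K u : ℝ} (hu : 0 < u + A)
    (heq : (1 - u) * (u + A) = Q * K) :
    deriv (fun v : ℝ => v * ((1 - v) - Q * K / (v + A))) u = u * (1 - 2 * u - A) / (u + A) := by
  have hg : HasDerivAt (fun v : ℝ => (1 - v) - Q * K / (v + A))
      ((0 - 1) - (0 * (u + A) - Q * K * 1) / (u + A) ^ 2) u :=
    ((hasDerivAt_const u 1).sub (hasDerivAt_id u)).sub
      ((hasDerivAt_const u (Q * K)).div ((hasDerivAt_id u).add_const A) hu.ne')
  have hzero : (1 - u) - Q * K / (u + A) = 0 := by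
    rw [← heq, mul_div_cancel_right₀ _ hu.ne']
    ring
  rw [(hg.id_mul_of_eq_zero hzero).deriv, ← heq]
  field_simp
  ring

theorem stmt_10_general (A C Q S : ℝ) (hA : 0 < A) (hC : 0 < C) (hS : 0 < S)
    (H₁ H₂ Δ : ℝ) (hH₁ : H₁ = 1 - A - Q) (hH₂ : H₂ = A - C * Q)
    (hΔ : Δ = H₁ ^ 2 + 4 * H₂)
    (hH₁pos : 0 < H₁) (hΔpos : 0 < Δ) :
    let u₂ := (H₁ + Real.sqrt Δ) / 2
    let J11 := deriv (fun u : ℝ => u * ((1 - u) - Q * (u₂ + C) / (u + A))) u₂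
    let J22 := deriv (fun v : ℝ => v * (S * (1 - v / (u₂ + C)))) (u₂ + C)
    let trJ := (H₁ + Real.sqrt Δ) * (Q - Real.sqrt Δ) / (H₁ + 2 * A + Real.sqrt Δ) - S
    let detJ := S * (H₁ + Real.sqrt Δ) * Real.sqrt Δ / (H₁ + 2 * A + Real.sqrt Δ)
    J11 + J22 = trJ ∧
    (S > (H₁ + Real.sqrt Δ) * (Q - Real.sqrt Δ) / (H₁ + 2 * A + Real.sqrt Δ) →
      trJ < 0 ∧
      ∀ z : ℂ, z ^ 2 - (trJ : ℂ) * z + (detJ : ℂ) = 0 → z.re < 0) := by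
  intro u₂ J11 J22 trJ detJ
  have hs : 0 < Real.sqrt Δ := Real.sqrt_pos.mpr hΔpos
  have hu₂ : 0 < u₂ := by positivity
  have hroot : u₂ ^ 2 = H₁ * u₂ + H₂ :=
    sq_eq_mul_add_of_eq_add_sqrt (hΔ ▸ hΔpos.le) (by rw [← hΔ])
  have heq : (1 - u₂) * (u₂ + A) = Q * (u₂ + C) := by
    rw [hH₁, hH₂] at hroot
    linear_combination -hroot
  have hJ11 : J11 = (H₁ + Real.sqrt Δ) * (Q - Real.sqrt Δ) / (H₁ + 2 * A + Real.sqrt Δ) := by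
    refine (deriv_holling_prey_at_equilibrium (by positivity) heq).trans ?_
    have h2u : H₁ + Real.sqrt Δ = 2 * u₂ := by ring
    rw [show H₁ + 2 * A + Real.sqrt Δ = 2 * (u₂ + A) by ring, h2u,
      show Q - Real.sqrt Δ = 1 - 2 * u₂ - A by linarith]
    field_simp
  have hJ22 : J22 = -S := deriv_logistic_at_capacity (by positivity)
  have hdet : 0 < detJ := by positivity
  refine ⟨by rw [hJ11, hJ22]; ring, fun hSgt => ?_⟩
  have htr : trJ < 0 := sub_neg.mpr hSgt
  exact ⟨htr, fun z hz => Complex.re_neg_of_sq_sub_mul_add_eq_zero htr hdet hz⟩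

/-- At P₂ the trace of the Jacobian equals
    (H₁+√Δ)(Q-√Δ)/(H₁+2A+√Δ) - S; if S exceeds (H₁+√Δ)(Q-√Δ)/(H₁+2A+√Δ)
    the trace is negative and, the determinant being positive, both
    eigenvalues have negative real part, so P₂ is linearly stable. -/
theorem stmt_10 (A C Q S : ℝ) (hA : 0 < A) (hC : 0 < C) (hQ : 0 < Q) (hS : 0 < S)
    (H₁ H₂ Δ : ℝ) (hH₁ : H₁ = 1 - A - Q) (hH₂ : H₂ = A - C * Q)
    (hΔ : Δ = H₁ ^ 2 + 4 * H₂)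
    (hH₁pos : 0 < H₁) (hH₂neg : H₂ < 0) (hΔpos : 0 < Δ) :
    let u₂ := (H₁ + Real.sqrt Δ) / 2
    let J11 := deriv (fun u : ℝ => u * ((1 - u) - Q * (u₂ + C) / (u + A))) u₂
    let J22 := deriv (fun v : ℝ => v * (S * (1 - v / (u₂ + C)))) (u₂ + C)
    let trJ := (H₁ + Real.sqrt Δ) * (Q - Real.sqrt Δ) / (H₁ + 2 * A + Real.sqrt Δ) - S
    let detJ := S * (H₁ + Real.sqrt Δ) * Real.sqrt Δ / (H₁ + 2 * A + Real.sqrt Δ)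
    J11 + J22 = trJ ∧
    (S > (H₁ + Real.sqrt Δ) * (Q - Real.sqrt Δ) / (H₁ + 2 * A + Real.sqrt Δ) →
      trJ < 0 ∧
      ∀ z : ℂ, z ^ 2 - (trJ : ℂ) * z + (detJ : ℂ) = 0 → z.re < 0) :=
  stmt_10_general A C Q S hA hC hS H₁ H₂ Δ hH₁ hH₂ hΔ hH₁pos hΔpos
end
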